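/- arXiv:2403.06335 — 10 statements merged into one kernel-verified Lean document; each statement's English description precedes it below -/
import Mathlib

section
/- For all real numbers β, c, ε₁, ε₂ with 0 ≤ β ≤ 1, 0 < c ≤ 1, ε₁ ≥ 0 and ε₂ ≥ 0, one has max((1 − ε₁)·β − ε₂, c) ≥ (1 − ε₁ − ε₂/c)·β. -/
/-- numerical core of the APPA combination lemma. -/
theorem stmt_0 (β c ε₁ ε₂ : ℝ) (hβ0 : 0 ≤ β) (hβ1 : β ≤ 1)
    (hc0 : 0 < c) (hc1 : c ≤ 1) (hε₁ : 0 ≤ ε₁) (hε₂ : 0 ≤ ε₂) :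
    max ((1 - ε₁) * β - ε₂) c ≥ (1 - ε₁ - ε₂ / c) * β := by
  rcases le_or_gt β c with h | h
  · refine le_trans ?_ (le_max_right _ _)
    rcases le_or_gt (1 - ε₁ - ε₂ / c) 0 with h0 | h0
    · nlinarith
    · nlinarith [div_nonneg hε₂ hc0.le]
  · refine le_trans ?_ (le_max_left _ _)
    have : ε₂ / c * β ≥ ε₂ := by
      rw [ge_iff_le, div_mul_eq_mul_div, le_div_iff₀ hc0]
      nlinarith
    nlinarith
end

section
/- Let S be a nonempty finite set, let f, g : S → ℝ be nonnegative functions, and set F = max_{Y ∈ S} f(Y) and G = max_{Y ∈ S} g(Y). Let s > 0, h ≥ 0, δ ≥ 0 and β ∈ [0, 1] be real numbers. If |f(Y) − s·g(Y) − h| ≤ δ·F for every Y ∈ S, then every Y₀ ∈ S with g(Y₀) ≥ β·G satisfies f(Y₀) ≥ (β − 2δ)·F. -/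
/-- abstract core of the Clause Modification APPA lemma. -/
theorem stmt_1 {α : Type*} (S : Finset α) (hS : S.Nonempty)
    (f g : α → ℝ) (hf : ∀ Y ∈ S, 0 ≤ f Y) (hg : ∀ Y ∈ S, 0 ≤ g Y)
    (s h δ β : ℝ) (hs : 0 < s) (hh : 0 ≤ h) (hδ : 0 ≤ δ)
    (hβ0 : 0 ≤ β) (hβ1 : β ≤ 1)
    (hbound : ∀ Y ∈ S, |f Y - s * g Y - h| ≤ δ * S.sup' hS f)
    (Y₀ : α) (hY₀ : Y₀ ∈ S) (happrox : g Y₀ ≥ β * S.sup' hS g) :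
    f Y₀ ≥ (β - 2 * δ) * S.sup' hS f := by
  obtain ⟨Y₁, hY₁, hF⟩ := S.exists_mem_eq_sup' hS f
  set F := S.sup' hS f with hFdef
  set G := S.sup' hS g with hGdef
  have hF0 : 0 ≤ F := hF ▸ hf Y₁ hY₁
  have h1 := (abs_le.mp (hbound Y₀ hY₀)).1
  have h2 := (abs_le.mp (hbound Y₁ hY₁)).2
  have hGY : g Y₁ ≤ G := Finset.le_sup' g hY₁
  -- s * G ≥ F - h - δF
  have hsG : s * G ≥ F - h - δ * F := by nlinarith [hGY, hF]
  have hG0 : 0 ≤ G := le_trans (hg Y₁ hY₁) hGY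
  nlinarith [mul_le_mul_of_nonneg_left happrox (le_of_lt hs),
    mul_le_mul_of_nonneg_left hsG hβ0, mul_nonneg hδ hF0, mul_nonneg hβ0 hh,
    mul_nonneg hβ0 (mul_nonneg hδ hF0)]
end

section
/- Let a, b, d ∈ ℕ with a ≥ 1, b ≥ 1 and d ≥ 2b. Let G = (A, B, E) be a K_{a,b}-free bipartite graph with A ≠ ∅ such that |A| · d^b ≥ a · (2·|B|)^b. Then there exists a vertex v ∈ A with deg_G(v) ≤ d. -/
/-- Neighborhood of a left vertex `v` in the bipartite graph `(A, B, E)`. -/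
def bipNbhd {α β : Type*} [DecidableEq α] [DecidableEq β]
    (B : Finset β) (E : Finset (α × β)) (v : α) : Finset β :=
  B.filter (fun u => (v, u) ∈ E)

/-- `(A, B, E)` is `K_{a,b}`-free: there are no `S ⊆ A`, `T ⊆ B` with
`|S| = a`, `|T| = b` and `S × T ⊆ E`. -/
def bipKabFree {α β : Type*} [DecidableEq α] [DecidableEq β]
    (A : Finset α) (B : Finset β) (E : Finset (α × β)) (a b : ℕ) : Prop :=
  ¬ ∃ (S : Finset α) (T : Finset β),
      S ⊆ A ∧ T ⊆ B ∧ S.card = a ∧ T.card = b ∧ S ×ˢ T ⊆ E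

/-- `2^b · (d+1)·d⋯(d-b+2) ≥ d^b` when `d ≥ 2b`. -/
lemma pow_le_two_pow_mul_descFactorial (b d : ℕ) (hd : 2 * b ≤ d) :
    d ^ b ≤ 2 ^ b * (d + 1).descFactorial b := by
  rw [Nat.descFactorial_eq_prod_range]
  calc d ^ b = ∏ _i ∈ Finset.range b, d := by
        rw [Finset.prod_const, Finset.card_range]
    _ ≤ ∏ i ∈ Finset.range b, 2 * (d + 1 - i) := by
        apply Finset.prod_le_prod (fun i _ => Nat.zero_le _)
        intro i hi
        rw [Finset.mem_range] at hi
        omega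
    _ = 2 ^ b * ∏ i ∈ Finset.range b, (d + 1 - i) := by
        rw [Finset.prod_mul_distrib, Finset.prod_const, Finset.card_range]

/-- in a `K_{a,b}`-free bipartite graph with
`|A| · d^b ≥ a · (2|B|)^b` and `d ≥ 2b`, some left vertex has degree `≤ d`. -/
theorem stmt_3 {α β : Type*} [DecidableEq α] [DecidableEq β]
    (A : Finset α) (B : Finset β) (E : Finset (α × β)) (hE : E ⊆ A ×ˢ B)
    (a b d : ℕ) (ha : 1 ≤ a) (hb : 1 ≤ b) (hd : 2 * b ≤ d)
    (hA : A.Nonempty)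
    (hcard : A.card * d ^ b ≥ a * (2 * B.card) ^ b)
    (hfree : bipKabFree A B E a b) :
    ∃ v ∈ A, (bipNbhd B E v).card ≤ d := by
  by_contra hcon
  push_neg at hcon
  -- B is nonempty
  have hBne : 0 < B.card := by
    obtain ⟨v, hv⟩ := hA
    have := hcon v hv
    have hsub : bipNbhd B E v ⊆ B := Finset.filter_subset _ _
    have := Finset.card_le_card hsub
    omega
  set N := bipNbhd B E
  -- double counting
  have key : ∀ v ∈ A, (N v).powersetCard b =
      (B.powersetCard b).filter (fun T => T ⊆ N v) := by
    intro v hv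
    ext T
    simp only [Finset.mem_powersetCard, Finset.mem_filter]
    constructor
    · rintro ⟨hT, hTc⟩
      exact ⟨⟨hT.trans (Finset.filter_subset _ _), hTc⟩, hT⟩
    · rintro ⟨⟨_, hTc⟩, hT⟩; exact ⟨hT, hTc⟩
  have hsum : ∑ v ∈ A, ((N v).powersetCard b).card =
      ∑ T ∈ B.powersetCard b, (A.filter (fun v => T ⊆ N v)).card := by
    rw [Finset.sum_congr rfl (fun v hv => by rw [key v hv])]
    simp only [Finset.card_filter]
    exact Finset.sum_comm
  -- upper bound on fibers
  have hfib : ∀ T ∈ B.powersetCard b, (A.filter (fun v => T ⊆ N v)).card ≤ a - 1 := by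
    intro T hT
    rw [Finset.mem_powersetCard] at hT
    by_contra hge
    push_neg at hge
    have hge' : a ≤ (A.filter (fun v => T ⊆ N v)).card := by omega
    obtain ⟨S, hS, hScard⟩ := Finset.exists_subset_card_eq hge'
    apply hfree
    refine ⟨S, T, hS.trans (Finset.filter_subset _ _), hT.1, hScard, hT.2, ?_⟩
    intro p hp
    rw [Finset.mem_product] at hp
    have hv := hS hp.1
    rw [Finset.mem_filter] at hv
    have := hv.2 hp.2
    simp only [N, bipNbhd, Finset.mem_filter] at this
    have : (p.1, p.2) ∈ E := this.2
    simpa using this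
  -- lower bound on each term
  have hlow : ∀ v ∈ A, (d + 1).choose b ≤ ((N v).powersetCard b).card := by
    intro v hv
    rw [Finset.card_powersetCard]
    exact Nat.choose_le_choose b (hcon v hv)
  have main : A.card * (d + 1).choose b ≤ (a - 1) * B.card.choose b := by
    calc A.card * (d + 1).choose b = ∑ _v ∈ A, (d + 1).choose b := by
          rw [Finset.sum_const, smul_eq_mul]
      _ ≤ ∑ v ∈ A, ((N v).powersetCard b).card := Finset.sum_le_sum hlow
      _ = ∑ T ∈ B.powersetCard b, (A.filter (fun v => T ⊆ N v)).card := hsum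
      _ ≤ ∑ _T ∈ B.powersetCard b, (a - 1) := Finset.sum_le_sum hfib
      _ = (a - 1) * B.card.choose b := by
          rw [Finset.sum_const, smul_eq_mul, Finset.card_powersetCard, mul_comm]
  -- multiply by 2^b * b!
  have h1 : A.card * d ^ b ≤ A.card * (2 ^ b * (b.factorial * (d + 1).choose b)) := by
    apply Nat.mul_le_mul_left
    rw [← Nat.descFactorial_eq_factorial_mul_choose]
    exact pow_le_two_pow_mul_descFactorial b d hd
  have h2 : (a - 1) * (2 ^ b * (b.factorial * B.card.choose b)) ≤ (a - 1) * (2 * B.card) ^ b := by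
    apply Nat.mul_le_mul_left
    rw [← Nat.descFactorial_eq_factorial_mul_choose, mul_pow]
    exact Nat.mul_le_mul_left _ (Nat.descFactorial_le_pow _ _)
  have h3 : A.card * (2 ^ b * (b.factorial * (d + 1).choose b)) ≤
      (a - 1) * (2 ^ b * (b.factorial * B.card.choose b)) := by
    calc A.card * (2 ^ b * (b.factorial * (d + 1).choose b))
        = (A.card * (d + 1).choose b) * (2 ^ b * b.factorial) := by ring
      _ ≤ ((a - 1) * B.card.choose b) * (2 ^ b * b.factorial) :=
          Nat.mul_le_mul_right _ main
      _ = (a - 1) * (2 ^ b * (b.factorial * B.card.choose b)) := by ring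
  have hfinal : a * (2 * B.card) ^ b ≤ (a - 1) * (2 * B.card) ^ b :=
    hcard.trans (h1.trans (h3.trans h2))
  have hpos : 0 < (2 * B.card) ^ b := by positivity
  have := Nat.le_of_mul_le_mul_right hfinal hpos
  omega
end

section
/- For all natural numbers b, d, n with 1 ≤ b, 2b ≤ d and d + 1 ≤ n, one has C(d+1, b) · (2n)^b ≥ C(n, b) · d^b, where C(·,·) denotes the binomial coefficient. -/
/-- the binomial-coefficient estimate
`C(d+1,b) · (2n)^b ≥ C(n,b) · d^b` for `1 ≤ b`, `2b ≤ d`, `d + 1 ≤ n`. -/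
theorem stmt_4 (b d n : ℕ) (hb : 1 ≤ b) (hd : 2 * b ≤ d) (hn : d + 1 ≤ n) :
    Nat.choose (d + 1) b * (2 * n) ^ b ≥ Nat.choose n b * d ^ b := by
  have key : Nat.descFactorial n b * d ^ b ≤ Nat.descFactorial (d + 1) b * (2 * n) ^ b := by
    have e1 : d ^ b = ∏ _i ∈ Finset.range b, d := by simp
    have e2 : (2 * n) ^ b = ∏ _i ∈ Finset.range b, (2 * n) := by simp
    rw [Nat.descFactorial_eq_prod_range, Nat.descFactorial_eq_prod_range, e1, e2,
      ← Finset.prod_mul_distrib, ← Finset.prod_mul_distrib]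
    apply Finset.prod_le_prod'
    intro i hi
    have hib : i < b := Finset.mem_range.mp hi
    have h1 : n - i ≤ n := Nat.sub_le _ _
    have h2 : d ≤ 2 * (d + 1 - i) := by omega
    calc (n - i) * d ≤ n * (2 * (d + 1 - i)) := Nat.mul_le_mul h1 h2
      _ = (d + 1 - i) * (2 * n) := by ring
  have hf : 0 < Nat.factorial b := Nat.factorial_pos b
  apply Nat.le_of_mul_le_mul_left _ hf
  calc Nat.factorial b * (Nat.choose n b * d ^ b)
      = Nat.descFactorial n b * d ^ b := by
        rw [Nat.descFactorial_eq_factorial_mul_choose]; ring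
    _ ≤ Nat.descFactorial (d + 1) b * (2 * n) ^ b := key
    _ = Nat.factorial b * (Nat.choose (d + 1) b * (2 * n) ^ b) := by
        rw [Nat.descFactorial_eq_factorial_mul_choose]; ring
end

section
/- Let a, b, w, ℓ ∈ ℕ with a ≥ 2, b ≥ 1, w ≥ 2 and ℓ ≥ 1. Every K_{a,b}-free bipartite graph G = (A, B, E) such that deg_G(v) ≤ ℓ for every v ∈ A and |A| ≥ a · ((w−1)·ℓ)^b contains a sunflower S ⊆ A with |S| = w. -/
/-- `S ⊆ A` is a sunflower: there is a core `K ⊆ B` with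
`N(v) ∩ N(v') = K` for all distinct `v, v' ∈ S`. -/
def bipSunflower {α β : Type*} [DecidableEq α] [DecidableEq β]
    (B : Finset β) (E : Finset (α × β)) (S : Finset α) : Prop :=
  ∃ K : Finset β, ∀ v ∈ S, ∀ v' ∈ S, v ≠ v' →
    bipNbhd B E v ∩ bipNbhd B E v' = K

/-! Erdős–Rado style argument, inducting on the core. Suppose the vertices of `s` all contain a
common set `C` of neighbours. Take a maximal subset `D ⊆ s` whose petals `N(v) \ C` are pairwise
disjoint; it is a sunflower with core `C`. If `|D| < w`, the petals of `D` cover at most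
`(w - 1) ℓ` points and every other petal meets them, so some point `y ∉ C` is a neighbour of a
`1 / ((w - 1) ℓ)` fraction of `s`; recurse with core `C ∪ {y}`. After `b` steps the core has `b`
points and still at least `a` vertices contain it, a `K_{a,b}`. -/

open Finset

namespace Finset

variable {α β : Type*} [DecidableEq α] [DecidableEq β]

theorem exists_maximal_pairwiseDisjoint_subset (s : Finset α) (P : α → Finset β) :
    ∃ D ⊆ s, (D : Set α).PairwiseDisjoint P ∧
      ∀ u ∈ s, u ∉ D → ∃ v ∈ D, ¬ Disjoint (P u) (P v) := by
  classical
  obtain ⟨D, hD, hmax⟩ :=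
    ({D ∈ s.powerset | ((D : Finset α) : Set α).PairwiseDisjoint P}).exists_maximal ⟨∅, by simp⟩
  simp only [mem_filter, mem_powerset] at hD hmax
  obtain ⟨hDs, hD⟩ := hD
  refine ⟨D, hDs, hD, fun u hu huD => ?_⟩
  by_contra! hdisj
  have hins : ((insert u D : Finset α) : Set α).PairwiseDisjoint P := by
    rw [coe_insert]
    exact hD.insert fun v hv _ => hdisj v hv
  exact huD (hmax ⟨insert_subset hu hDs, hins⟩ (subset_insert u D) (mem_insert_self u D))

theorem inter_eq_of_disjoint_sdiff {C X Y : Finset β} (hX : C ⊆ X) (hY : C ⊆ Y)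
    (h : Disjoint (X \ C) (Y \ C)) : X ∩ Y = C := by
  refine Subset.antisymm (fun x hx => ?_) (subset_inter hX hY)
  rw [mem_inter] at hx
  by_contra hxC
  exact disjoint_left.mp h (mem_sdiff.mpr ⟨hx.1, hxC⟩) (mem_sdiff.mpr ⟨hx.2, hxC⟩)

theorem exists_sunflower_or_exists_le_card_filter_mem (F : α → Finset β) (s : Finset α)
    (C : Finset β) {w ℓ t : ℕ} (hℓ : 1 ≤ ℓ) (ht : 2 ≤ t) (hC : ∀ v ∈ s, C ⊆ F v)
    (hF : ∀ v ∈ s, #(F v) ≤ ℓ) (hs : (w - 1) * ℓ * (t - 1) < #s) :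
    (∃ S ⊆ s, #S = w ∧ ∀ v ∈ S, ∀ v' ∈ S, v ≠ v' → F v ∩ F v' = C) ∨
      ∃ y ∉ C, t ≤ #{v ∈ s | y ∈ F v} := by
  set P := fun v => F v \ C
  obtain ⟨D, hDs, hDdisj, hDmax⟩ := exists_maximal_pairwiseDisjoint_subset s P
  by_cases hwD : w ≤ #D
  · obtain ⟨S, hSD, hSw⟩ := exists_subset_card_eq hwD
    exact .inl ⟨S, hSD.trans hDs, hSw, fun v hv v' hv' hne =>
      inter_eq_of_disjoint_sdiff (hC v (hDs (hSD hv))) (hC v' (hDs (hSD hv')))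
        (hDdisj (hSD hv) (hSD hv') hne)⟩
  refine .inr ?_
  by_contra! hsmall
  -- The `insert v` matters only for an empty petal; a nonempty petal already covers `v`.
  set X := fun v => insert v ((P v).biUnion fun y => {u ∈ s | y ∈ F u})
  have hX : ∀ v ∈ D, #(X v) ≤ ℓ * (t - 1) := by
    intro v hv
    rcases (P v).eq_empty_or_nonempty with hPv | ⟨y, hy⟩
    · simp only [X, hPv, biUnion_empty, insert_empty, card_singleton]
      exact Nat.mul_pos (by omega) (by omega)
    have hvmem : v ∈ (P v).biUnion fun y => {u ∈ s | y ∈ F u} :=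
      mem_biUnion.mpr ⟨y, hy, mem_filter.mpr ⟨hDs hv, (mem_sdiff.mp hy).1⟩⟩
    simp only [X, insert_eq_of_mem hvmem]
    calc _ ≤ #(P v) * (t - 1) := card_biUnion_le_card_mul _ _ _ fun y hy =>
            Nat.le_sub_one_of_lt (hsmall y (mem_sdiff.mp hy).2)
      _ ≤ ℓ * (t - 1) :=
            Nat.mul_le_mul_right _ ((card_le_card sdiff_subset).trans (hF v (hDs hv)))
  have hcover : s ⊆ D.biUnion X := by
    intro u hu
    by_cases huD : u ∈ D
    · exact mem_biUnion.mpr ⟨u, huD, mem_insert_self u _⟩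
    obtain ⟨v, hv, hnd⟩ := hDmax u hu huD
    obtain ⟨y, hyu, hyv⟩ := not_disjoint_iff.mp hnd
    exact mem_biUnion.mpr ⟨v, hv, mem_insert_of_mem
      (mem_biUnion.mpr ⟨y, hyv, mem_filter.mpr ⟨hu, (mem_sdiff.mp hyu).1⟩⟩)⟩
  have hsD := (card_le_card hcover).trans (card_biUnion_le_card_mul D X _ hX)
  have hDw : #D * (ℓ * (t - 1)) ≤ (w - 1) * (ℓ * (t - 1)) := Nat.mul_le_mul_right _ (by omega)
  rw [mul_assoc] at hs
  omega

end Finset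

section BipartiteGraph

variable {α β : Type*} [DecidableEq α] [DecidableEq β]
  {A : Finset α} {B : Finset β} {E : Finset (α × β)} {a b : ℕ}

theorem bipNbhd_subset (v : α) : bipNbhd B E v ⊆ B := filter_subset _ _

theorem bipKabFree.card_lt (hfree : bipKabFree A B E a b) {S : Finset α} {T : Finset β}
    (hS : S ⊆ A) (hT : T ⊆ B) (hTb : #T = b) (hST : ∀ v ∈ S, T ⊆ bipNbhd B E v) :
    #S < a := by
  by_contra! haS
  obtain ⟨S', hS'S, hS'a⟩ := exists_subset_card_eq haS
  refine hfree ⟨S', T, hS'S.trans hS, hT, hS'a, hTb, fun p hp => ?_⟩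
  rw [mem_product] at hp
  exact (mem_filter.mp (hST p.1 (hS'S hp.1) hp.2)).2

theorem bipKabFree.exists_sunflower_of_subset_bipNbhd (hfree : bipKabFree A B E a b)
    {w ℓ : ℕ} (ha : 2 ≤ a) (hw : 2 ≤ w) (hℓ : 1 ≤ ℓ)
    (hdeg : ∀ v ∈ A, #(bipNbhd B E v) ≤ ℓ) (n : ℕ) :
    ∀ (C : Finset β) (s : Finset α), s ⊆ A → C ⊆ B → (∀ v ∈ s, C ⊆ bipNbhd B E v) →
      #C + n = b → a * ((w - 1) * ℓ) ^ n ≤ #s →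
      ∃ S ⊆ s, #S = w ∧ bipSunflower B E S := by
  have hM : 1 ≤ (w - 1) * ℓ := Nat.mul_pos (by omega) (by omega)
  induction n with
  | zero =>
    intro C s hsA hCB hsC hCb hs
    rw [pow_zero, mul_one] at hs
    exact absurd (hfree.card_lt hsA hCB (by omega) hsC) (by omega)
  | succ n ih =>
    intro C s hsA hCB hsC hCb hs
    set t := a * ((w - 1) * ℓ) ^ n
    have ht : 2 ≤ t := le_mul_of_le_of_one_le ha (Nat.one_le_pow _ _ hM)
    have hst : (w - 1) * ℓ * (t - 1) < #s := by
      have hpow : t * ((w - 1) * ℓ) = a * ((w - 1) * ℓ) ^ (n + 1) := by ring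
      have hlt : (w - 1) * ℓ * (t - 1) < (w - 1) * ℓ * t :=
        Nat.mul_lt_mul_of_pos_left (by omega) hM
      linarith
    rcases exists_sunflower_or_exists_le_card_filter_mem (bipNbhd B E) s C hℓ ht hsC
      (fun v hv => hdeg v (hsA hv)) hst with ⟨S, hSs, hSw, hS⟩ | ⟨y, hyC, hy⟩
    · exact ⟨S, hSs, hSw, C, hS⟩
    obtain ⟨v, hv⟩ : ({v ∈ s | y ∈ bipNbhd B E v} : Finset α).Nonempty := card_pos.mp (by omega)
    have hyB : y ∈ B := bipNbhd_subset v (mem_filter.mp hv).2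
    obtain ⟨S, hS, hSw, hSun⟩ := ih (insert y C) {v ∈ s | y ∈ bipNbhd B E v}
      ((filter_subset _ _).trans hsA) (insert_subset hyB hCB)
      (fun u hu => insert_subset (mem_filter.mp hu).2 (hsC u (mem_filter.mp hu).1))
      (by rw [card_insert_of_notMem hyC]; omega) hy
    exact ⟨S, hS.trans (filter_subset _ _), hSw, hSun⟩

end BipartiteGraph

theorem stmt_5_general {α β : Type*} [DecidableEq α] [DecidableEq β]
    (A : Finset α) (B : Finset β) (E : Finset (α × β))
    (a b w ℓ : ℕ) (ha : 2 ≤ a) (hw : 2 ≤ w) (hℓ : 1 ≤ ℓ)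
    (hfree : bipKabFree A B E a b)
    (hdeg : ∀ v ∈ A, (bipNbhd B E v).card ≤ ℓ)
    (hA : A.card ≥ a * ((w - 1) * ℓ) ^ b) :
    ∃ S ⊆ A, S.card = w ∧ bipSunflower B E S :=
  hfree.exists_sunflower_of_subset_bipNbhd ha hw hℓ hdeg b ∅ A subset_rfl (empty_subset B)
    (fun _ _ => empty_subset _) (by simp) hA

/-- the `K_{a,b}`-free sunflower lemma. -/
theorem stmt_5 {α β : Type*} [DecidableEq α] [DecidableEq β]
    (A : Finset α) (B : Finset β) (E : Finset (α × β)) (hE : E ⊆ A ×ˢ B)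
    (a b w ℓ : ℕ) (ha : 2 ≤ a) (hb : 1 ≤ b) (hw : 2 ≤ w) (hℓ : 1 ≤ ℓ)
    (hfree : bipKabFree A B E a b)
    (hdeg : ∀ v ∈ A, (bipNbhd B E v).card ≤ ℓ)
    (hA : A.card ≥ a * ((w - 1) * ℓ) ^ b) :
    ∃ S ⊆ A, S.card = w ∧ bipSunflower B E S :=
  stmt_5_general A B E a b w ℓ ha hw hℓ hfree hdeg hA
end

section
/- Let k ≥ 1, let Φ = (V, 𝒞) be a CNF formula in which every clause occurrence C satisfies |neg(C)| ≤ k + 1, and let τ > 0 be a real number. Suppose v₁, …, v_t ∈ V are distinct variables such that for every i ∈ {1, …, t}, nndeg_{Φ, V ∖ {v₁, …, v_{i−1}}}(v_i) > τ. Then t · τ ≤ |𝒞_¬| · (ln(k+1) + 1). -/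
/-- Normalized negative degree of `v` w.r.t. the clause multiset `𝒞` and
the variable set `W`: `Σ_{C ∈ 𝒞, v ∈ neg(C)} 1 / |neg(C) ∩ W|`,
summed over clause occurrences with multiplicity. -/
noncomputable def nndeg {α : Type*} [DecidableEq α] (𝒞 : Multiset (Finset α × Finset α))
    (W : Finset α) (v : α) : ℝ :=
  ((𝒞.filter (fun C => v ∈ C.2)).map (fun C => (1 : ℝ) / (C.2 ∩ W).card)).sum

private lemma nndeg_eq {α : Type*} [DecidableEq α] (𝒞 : Multiset (Finset α × Finset α))
    (W : Finset α) (v : α) :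
    nndeg 𝒞 W v = (𝒞.map fun C => if v ∈ C.2 then (1:ℝ)/((C.2 ∩ W).card) else 0).sum := by
  unfold nndeg
  induction 𝒞 using Multiset.induction_on with
  | empty => simp
  | cons C s ih =>
    by_cases h : v ∈ C.2 <;>
      simp only [Multiset.filter_cons, h, ite_true, ite_false, Multiset.map_add,
        Multiset.sum_add, Multiset.map_singleton, Multiset.sum_singleton, Multiset.map_zero,
        Multiset.sum_zero, Multiset.map_cons, Multiset.sum_cons, ih, zero_add]

private lemma msum_ite {β : Type*} (m : Multiset β) (p : β → Prop) [DecidablePred p] (c : ℝ) :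
    (m.map fun x => if p x then c else 0).sum = (m.countP p : ℝ) * c := by
  induction m using Multiset.induction_on with
  | empty => simp
  | cons a s ih =>
    by_cases h : p a <;>
      simp [h, ih, Multiset.countP_cons, add_mul] <;> push_cast <;> ring

private lemma msum_le {β : Type*} (m : Multiset β) (f g : β → ℝ)
    (h : ∀ x ∈ m, f x ≤ g x) : (m.map f).sum ≤ (m.map g).sum := by
  induction m using Multiset.induction_on with
  | empty => simp
  | cons a s ih =>
    simp only [Multiset.map_cons, Multiset.sum_cons]
    exact add_le_add (h a (Multiset.mem_cons_self a s))
      (ih fun x hx => h x (Multiset.mem_cons_of_mem hx))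

private lemma sum_msum_comm {β ι : Type*} (s : Finset ι) (m : Multiset β) (f : ι → β → ℝ) :
    ∑ i ∈ s, (m.map (f i)).sum = (m.map fun x => ∑ i ∈ s, f i x).sum := by
  induction m using Multiset.induction_on with
  | empty => simp
  | cons a mm ih => simp [Finset.sum_add_distrib, ih]

set_option maxHeartbeats 1000000 in
/-- if each clause has at most `k+1` negative literals and
`v₁, …, v_t` are distinct variables with
`nndeg_{Φ, V \ {v₁,…,v_{i−1}}}(v_i) > τ` for every `i`,
then `t · τ ≤ |𝒞_¬| · (ln(k+1) + 1)`. -/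
theorem stmt_6 {α : Type*} [DecidableEq α] (V : Finset α)
    (𝒞 : Multiset (Finset α × Finset α))
    (h𝒞 : ∀ C ∈ 𝒞, C.1 ⊆ V ∧ C.2 ⊆ V)
    (k : ℕ) (hk : 1 ≤ k)
    (hneg : ∀ C ∈ 𝒞, C.2.card ≤ k + 1)
    (τ : ℝ) (hτ : 0 < τ)
    (t : ℕ) (v : Fin t → α) (hv : ∀ i, v i ∈ V) (hinj : Function.Injective v)
    (hnn : ∀ i : Fin t,
      nndeg 𝒞 (V \ (Finset.univ.filter (fun j : Fin t => j < i)).image v) (v i) > τ) :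
    (t : ℝ) * τ ≤
      (Multiset.countP (fun C => C.2.Nonempty) 𝒞 : ℝ) * (Real.log (k + 1) + 1) := by
  set W : Fin t → Finset α :=
    fun i => V \ (Finset.univ.filter (fun j : Fin t => j < i)).image v with hWdef
  have h1 : (t : ℝ) * τ ≤ ∑ i : Fin t, nndeg 𝒞 (W i) (v i) := by
    calc (t:ℝ)*τ = ∑ _i : Fin t, τ := by simp [mul_comm]
    _ ≤ _ := Finset.sum_le_sum fun i _ => (hnn i).le
  have h2 : ∑ i : Fin t, nndeg 𝒞 (W i) (v i)
      = (𝒞.map fun C => ∑ i : Fin t, if v i ∈ C.2 then (1:ℝ)/((C.2 ∩ W i).card) else 0).sum := by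
    simp_rw [nndeg_eq]
    exact sum_msum_comm _ _ _
  have h3 : ∀ C ∈ 𝒞, (∑ i : Fin t, if v i ∈ C.2 then (1:ℝ)/((C.2 ∩ W i).card) else 0)
      ≤ (if C.2.Nonempty then Real.log (k+1) + 1 else 0) := by
    intro C hC
    rw [← Finset.sum_filter]
    set I := Finset.univ.filter (fun i : Fin t => v i ∈ C.2) with hI
    by_cases hne : C.2.Nonempty
    · simp only [hne, if_true]
      have hCV : C.2 ⊆ V := (h𝒞 C hC).2
      set n := C.2.card with hn
      have hn1 : 1 ≤ n := Finset.card_pos.mpr hne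
      have hnk : n ≤ k + 1 := hneg C hC
      set r : Fin t → ℕ := fun i => (I.filter (fun j => j < i)).card with hr
      have hSeq : ∀ i : Fin t,
          C.2 ∩ (Finset.univ.filter (fun j : Fin t => j < i)).image v
            = (I.filter (fun j => j < i)).image v := by
        intro i
        ext x
        simp only [Finset.mem_inter, Finset.mem_image, Finset.mem_filter, Finset.mem_univ,
          true_and, hI]
        constructor
        · rintro ⟨hx, j, hj, rfl⟩; exact ⟨j, ⟨hx, hj⟩, rfl⟩
        · rintro ⟨j, ⟨hx, hj⟩, rfl⟩; exact ⟨hx, j, hj, rfl⟩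
      have hcard : ∀ i ∈ I, (C.2 ∩ W i).card = n - r i ∧ 1 ≤ n - r i := by
        intro i hi
        have hiC : v i ∈ C.2 := by
          simpa [hI] using hi
        have hWi : C.2 ∩ W i
            = C.2 \ (C.2 ∩ (Finset.univ.filter (fun j : Fin t => j < i)).image v) := by
          rw [hWdef]
          ext x
          simp only [Finset.mem_inter, Finset.mem_sdiff]
          constructor
          · rintro ⟨hx, hxV, hxS⟩; exact ⟨hx, fun h => hxS h.2⟩
          · rintro ⟨hx, hxS⟩; exact ⟨hx, hCV hx, fun h => hxS ⟨hx, h⟩⟩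
        have hceq : (C.2 ∩ W i).card = n - r i := by
          rw [hWi, Finset.card_sdiff_of_subset (Finset.inter_subset_left), hSeq,
            Finset.card_image_of_injective _ hinj]
        refine ⟨hceq, ?_⟩
        have hmem : v i ∈ C.2 ∩ W i := by
          rw [hWdef]
          simp only [Finset.mem_inter, Finset.mem_sdiff, Finset.mem_image, Finset.mem_filter,
            Finset.mem_univ, true_and]
          refine ⟨hiC, hv i, ?_⟩
          rintro ⟨j, hj, hje⟩
          rw [hinj hje] at hj
          exact lt_irrefl i hj
        have := Finset.card_pos.mpr ⟨v i, hmem⟩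
        omega
      set g : Fin t → ℕ := fun i => n - r i with hg
      have hr_mono : ∀ a ∈ I, ∀ b ∈ I, a < b → r a < r b := by
        intro a ha b hb hab
        apply Finset.card_lt_card
        constructor
        · intro x hx
          rw [Finset.mem_filter] at hx ⊢
          exact ⟨hx.1, lt_trans hx.2 hab⟩
        · intro hsub
          have : a ∈ I.filter (fun j => j < b) := Finset.mem_filter.mpr ⟨ha, hab⟩
          exact absurd (Finset.mem_filter.mp (hsub this)).2 (lt_irrefl a)
      have hginj : Set.InjOn g I := by
        intro a ha b hb hab
        by_contra hne'
        rcases lt_or_gt_of_ne hne' with h | h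
        · have h1 := hr_mono a ha b hb h
          have h2 := (hcard a ha).2
          have h3 := (hcard b hb).2
          simp only [hg] at hab
          omega
        · have h1 := hr_mono b hb a ha h
          have h2 := (hcard a ha).2
          have h3 := (hcard b hb).2
          simp only [hg] at hab
          omega
      calc ∑ i ∈ I, (1:ℝ)/((C.2 ∩ W i).card)
          = ∑ i ∈ I, (1:ℝ)/(g i) := by
            refine Finset.sum_congr rfl fun i hi => ?_
            rw [(hcard i hi).1]
        _ = ∑ s ∈ I.image g, (1:ℝ)/s := by
            rw [Finset.sum_image fun a ha b hb h =>
              hginj (Finset.mem_coe.mpr ha) (Finset.mem_coe.mpr hb) h]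
        _ ≤ ∑ s ∈ Finset.Icc 1 (k+1), (1:ℝ)/s := by
            apply Finset.sum_le_sum_of_subset_of_nonneg
            · intro s hs
              obtain ⟨i, hi, rfl⟩ := Finset.mem_image.mp hs
              have h1 := (hcard i hi).1
              have h2 := (hcard i hi).2
              rw [Finset.mem_Icc]
              constructor
              · simp only [hg]; omega
              · simp only [hg]; omega
            · intro s _ _
              positivity
        _ = ((harmonic (k+1) : ℚ) : ℝ) := by
            rw [harmonic_eq_sum_Icc]
            push_cast
            simp [one_div]
        _ ≤ Real.log (k+1) + 1 := by
            have := harmonic_le_one_add_log (k+1)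
            push_cast at this ⊢
            linarith
    · rw [Finset.not_nonempty_iff_eq_empty] at hne
      simp [hI, hne]
  calc (t : ℝ) * τ
      ≤ ∑ i : Fin t, nndeg 𝒞 (W i) (v i) := h1
    _ = (𝒞.map fun C => ∑ i : Fin t,
          if v i ∈ C.2 then (1:ℝ)/((C.2 ∩ W i).card) else 0).sum := h2
    _ ≤ (𝒞.map fun C => if C.2.Nonempty then Real.log (k+1) + 1 else 0).sum :=
        msum_le _ _ _ h3
    _ = (Multiset.countP (fun C => C.2.Nonempty) 𝒞 : ℝ) * (Real.log (k + 1) + 1) := by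
        rw [msum_ite]
end

section
/- Let Φ = (V, 𝒞) be a CNF formula, let τ ≥ 0 be a real number, and let W ⊆ V satisfy nndeg_{Φ,W}(v) ≤ τ for every v ∈ W. Then for every finite Y ⊆ V, the number of clause occurrences C of 𝒞 (counted with multiplicity) with neg(C) ∩ W ≠ ∅ that are not satisfied by Y is at most |Y| · τ. -/
/-- `Y` satisfies clause `C = (pos, neg)` iff `pos ∩ Y ≠ ∅` or `neg ⊈ Y`. -/
def ClauseSat {α : Type*} [DecidableEq α] (Y : Finset α) (C : Finset α × Finset α) : Prop :=
  (C.1 ∩ Y).Nonempty ∨ ¬ C.2 ⊆ Y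

instance {α : Type*} [DecidableEq α] (Y : Finset α) (C : Finset α × Finset α) :
    Decidable (ClauseSat Y C) := by
  unfold ClauseSat; infer_instance

lemma sum_map_mono' {β : Type*} {s t : Multiset β} (h : s ≤ t) (f : β → ℝ)
    (hf : ∀ b, 0 ≤ f b) : (s.map f).sum ≤ (t.map f).sum := by
  obtain ⟨u, rfl⟩ := Multiset.le_iff_exists_add.mp h
  rw [Multiset.map_add, Multiset.sum_add]
  have : 0 ≤ (u.map f).sum := Multiset.sum_nonneg (by
    intro x hx; obtain ⟨b, _, rfl⟩ := Multiset.mem_map.mp hx; exact hf b)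
  linarith

lemma map_filter_sum' {β : Type*} (s : Multiset β) (p : β → Prop) [DecidablePred p]
    (f : β → ℝ) :
    ((s.filter p).map f).sum = (s.map (fun C => if p C then f C else 0)).sum := by
  induction s using Multiset.induction with
  | empty => simp
  | cons a s ih =>
    by_cases hp : p a <;> simp [Multiset.filter_cons, hp, ih]

lemma sum_map_finsum_swap {β γ : Type*} (s : Multiset β) (T : Finset γ) (g : β → γ → ℝ) :
    (s.map (fun C => ∑ v ∈ T, g C v)).sum = ∑ v ∈ T, (s.map (fun C => g C v)).sum := by
  induction s using Multiset.induction with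
  | empty => simp
  | cons a s ih => simp [ih, Finset.sum_add_distrib]

/-- if `nndeg_{Φ,W}(v) ≤ τ` for all `v ∈ W`, then for every `Y`,
the number of clause occurrences meeting `W` negatively that `Y` fails to
satisfy is at most `|Y| · τ`. -/
theorem stmt_7 {α : Type*} [DecidableEq α] (V : Finset α)
    (𝒞 : Multiset (Finset α × Finset α))
    (h𝒞 : ∀ C ∈ 𝒞, C.1 ⊆ V ∧ C.2 ⊆ V)
    (τ : ℝ) (hτ : 0 ≤ τ)
    (W : Finset α) (hW : W ⊆ V) (hnn : ∀ v ∈ W, nndeg 𝒞 W v ≤ τ)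
    (Y : Finset α) (hY : Y ⊆ V) :
    (Multiset.countP (fun C => (C.2 ∩ W).Nonempty ∧ ¬ ClauseSat Y C) 𝒞 : ℝ) ≤
      Y.card * τ := by
  classical
  set P : Finset α × Finset α → Prop := fun C => (C.2 ∩ W).Nonempty ∧ ¬ ClauseSat Y C with hP
  set g : Finset α × Finset α → α → ℝ :=
    fun C v => if v ∈ C.2 then (1 : ℝ) / (C.2 ∩ W).card else 0 with hg
  set S := 𝒞.filter P with hS
  have hcount : (Multiset.countP P 𝒞 : ℝ) = ((S.map fun _ => (1:ℝ)).sum) := by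
    rw [Multiset.countP_eq_card_filter]
    simp [hS]
  have hone : ∀ C ∈ S, (1 : ℝ) = ∑ v ∈ Y ∩ W, g C v := by
    intro C hC
    rw [Multiset.mem_filter] at hC
    obtain ⟨hC𝒞, hne, hsat⟩ := hC
    rw [ClauseSat, not_or, not_not] at hsat
    obtain ⟨-, hnegY⟩ := hsat
    have hsub : C.2 ∩ W ⊆ Y ∩ W :=
      Finset.inter_subset_inter hnegY (Finset.Subset.refl W)
    have : ∑ v ∈ Y ∩ W, g C v
        = ∑ v ∈ (Y ∩ W).filter (fun v => v ∈ C.2), (1 : ℝ) / (C.2 ∩ W).card := by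
      rw [Finset.sum_filter]
    rw [this]
    have hfe : (Y ∩ W).filter (fun v => v ∈ C.2) = C.2 ∩ W := by
      ext v
      simp only [Finset.mem_filter, Finset.mem_inter]
      constructor
      · rintro ⟨⟨-, hvW⟩, hv2⟩; exact ⟨hv2, hvW⟩
      · rintro ⟨hv2, hvW⟩
        exact ⟨Finset.mem_inter.mp (hsub (Finset.mem_inter.mpr ⟨hv2, hvW⟩)), hv2⟩
    rw [hfe, Finset.sum_const, nsmul_eq_mul]
    have hcard : (0 : ℝ) < (C.2 ∩ W).card := by
      exact_mod_cast Finset.card_pos.mpr hne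
    field_simp
  calc (Multiset.countP P 𝒞 : ℝ)
      = (S.map fun C => ∑ v ∈ Y ∩ W, g C v).sum := by
        rw [hcount]; exact congrArg Multiset.sum (Multiset.map_congr rfl hone)
    _ = ∑ v ∈ Y ∩ W, (S.map fun C => g C v).sum := sum_map_finsum_swap ..
    _ ≤ ∑ v ∈ Y ∩ W, τ := by
        apply Finset.sum_le_sum
        intro v hv
        have hvW : v ∈ W := (Finset.mem_inter.mp hv).2
        have h1 : (S.map fun C => g C v).sum ≤ (𝒞.map fun C => g C v).sum := by
          apply sum_map_mono' (Multiset.filter_le P 𝒞)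
          intro C; simp only [hg]; positivity
        have h2 : (𝒞.map fun C => g C v).sum = nndeg 𝒞 W v := by
          rw [nndeg, map_filter_sum']
        calc (S.map fun C => g C v).sum ≤ _ := h1
          _ = nndeg 𝒞 W v := h2
          _ ≤ τ := hnn v hvW
    _ = (Y ∩ W).card * τ := by rw [Finset.sum_const, nsmul_eq_mul]
    _ ≤ Y.card * τ := by
        apply mul_le_mul_of_nonneg_right _ hτ
        exact_mod_cast Finset.card_le_card Finset.inter_subset_left
end

section
/- Let k ≥ 1, let ε ∈ (0, 1), and let Φ = (V, 𝒞) be a CNF formula in which every clause occurrence C satisfies |neg(C)| ≤ k + 1. Then there exists W ⊆ V with |W| ≤ 2k·(ln(k+1) + 1)/ε such that for every Y ⊆ V with |Y| ≤ k, the number of clause occurrences C of 𝒞 (counted with multiplicity) with neg(C) ∖ W ≠ ∅ that are not satisfied by Y is at most (ε/2) · |𝒞_¬|. -/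
private lemma countP_imp_le {α : Type*} {p q : α → Prop} [DecidablePred p] [DecidablePred q]
    (h : ∀ a, p a → q a) (s : Multiset α) : s.countP p ≤ s.countP q := by
  simp only [Multiset.countP_eq_card_filter]
  exact Multiset.card_le_card (Multiset.monotone_filter_right s h)

/-- Greedy construction of the set `W`. -/
private lemma build {α : Type*} [DecidableEq α] (V : Finset α)
    (𝒞 : Multiset (Finset α × Finset α)) (k : ℕ) (D : ℝ) (hD : 0 < D) :
    ∀ n : ℕ, ∀ W : Finset α, W ⊆ V →
      Multiset.countP (fun C => (C.2 \ W).Nonempty) 𝒞 ≤ n →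
      ∃ W' : Finset α, W ⊆ W' ∧ W' ⊆ V ∧ (W'.card : ℝ) ≤ W.card + k * ((n : ℝ) / D) ∧
        ∀ Y ⊆ V, Y.card ≤ k →
          (Multiset.countP (fun C => (C.2 \ W').Nonempty ∧ ¬ ClauseSat Y C) 𝒞 : ℝ) ≤ D := by
  intro n
  induction n using Nat.strong_induction_on with
  | _ n ih =>
    intro W hWV hcount
    by_cases hgood : ∀ Y ⊆ V, Y.card ≤ k →
        (Multiset.countP (fun C => (C.2 \ W).Nonempty ∧ ¬ ClauseSat Y C) 𝒞 : ℝ) ≤ D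
    · refine ⟨W, subset_rfl, hWV, ?_, hgood⟩
      have : (0 : ℝ) ≤ k * ((n : ℝ) / D) := by positivity
      linarith
    · push_neg at hgood
      obtain ⟨Y, hYV, hYk, hbig⟩ := hgood
      set c : ℕ := Multiset.countP (fun C => (C.2 \ W).Nonempty ∧ ¬ ClauseSat Y C) 𝒞 with hc
      set W₂ : Finset α := W ∪ Y with hW₂
      set n₂ : ℕ := Multiset.countP (fun C => (C.2 \ W₂).Nonempty) 𝒞 with hn₂
      -- key counting inequality : n₂ + c ≤ countP badW ≤ n
      have hkey : n₂ + c ≤ n := by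
        have hsplit := Multiset.countP_eq_countP_filter_add 𝒞
          (fun C => (C.2 \ W).Nonempty) (fun C => ClauseSat Y C)
        have h1 : n₂ ≤ (Multiset.filter (fun C => ClauseSat Y C) 𝒞).countP
            (fun C => (C.2 \ W).Nonempty) := by
          rw [Multiset.countP_filter]
          refine countP_imp_le (fun C hC => ?_) 𝒞
          obtain ⟨x, hx⟩ := hC
          simp only [Finset.mem_sdiff, Finset.mem_union, hW₂] at hx
          push_neg at hx
          refine ⟨⟨x, Finset.mem_sdiff.2 ⟨hx.1, hx.2.1⟩⟩, Or.inr fun hsub => hx.2.2 (hsub hx.1)⟩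
        have h2 : c ≤ (Multiset.filter (fun C => ¬ ClauseSat Y C) 𝒞).countP
            (fun C => (C.2 \ W).Nonempty) := by
          rw [Multiset.countP_filter]
        calc n₂ + c ≤ _ + _ := Nat.add_le_add h1 h2
          _ = Multiset.countP (fun C => (C.2 \ W).Nonempty) 𝒞 := hsplit.symm
          _ ≤ n := hcount
      have hc1 : 1 ≤ c := by
        by_contra h
        interval_cases c
        simp at hbig
        linarith
      have hn₂lt : n₂ < n := by omega
      obtain ⟨W', hWW', hW'V, hcard, hfinal⟩ := ih n₂ hn₂lt W₂
        (Finset.union_subset hWV hYV) le_rfl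
      refine ⟨W', (Finset.subset_union_left).trans hWW', hW'V, ?_, hfinal⟩
      have hcard₂ : (W₂.card : ℝ) ≤ W.card + k := by
        have := Finset.card_union_le W Y
        have : W₂.card ≤ W.card + k := le_trans (Finset.card_union_le W Y) (by omega)
        exact_mod_cast this
      have hDc : D < (c : ℝ) := hbig
      have hsum : (n₂ : ℝ) + c ≤ n := by exact_mod_cast hkey
      have hstep : (k : ℝ) * (1 + (n₂ : ℝ) / D) ≤ k * ((n : ℝ) / D) := by
        have h1 : 1 + (n₂ : ℝ) / D ≤ (n : ℝ) / D := by
          rw [le_div_iff₀ hD]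
          have heq : (1 + (n₂ : ℝ) / D) * D = D + n₂ := by field_simp
          rw [heq]
          linarith
        have : (0:ℝ) ≤ k := Nat.cast_nonneg k
        nlinarith
      calc (W'.card : ℝ) ≤ W₂.card + k * ((n₂ : ℝ) / D) := hcard
        _ ≤ W.card + k + k * ((n₂ : ℝ) / D) := by linarith
        _ = W.card + k * (1 + (n₂ : ℝ) / D) := by ring
        _ ≤ W.card + k * ((n : ℝ) / D) := by linarith

/-- there is a set `W` of at most `2k(ln(k+1)+1)/ε` variables such
that, for every solution `Y` of size at most `k`, the number of clause
occurrences having a negative literal outside `W` that `Y` fails to satisfy is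
at most `(ε/2) · |𝒞_¬|`. -/
theorem stmt_8 {α : Type*} [DecidableEq α] (V : Finset α)
    (𝒞 : Multiset (Finset α × Finset α))
    (h𝒞 : ∀ C ∈ 𝒞, C.1 ⊆ V ∧ C.2 ⊆ V)
    (k : ℕ) (hk : 1 ≤ k) (ε : ℝ) (hε0 : 0 < ε) (hε1 : ε < 1)
    (hneg : ∀ C ∈ 𝒞, C.2.card ≤ k + 1) :
    ∃ W ⊆ V, (W.card : ℝ) ≤ 2 * k * (Real.log (k + 1) + 1) / ε ∧
      ∀ Y ⊆ V, Y.card ≤ k →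
        (Multiset.countP (fun C => (C.2 \ W).Nonempty ∧ ¬ ClauseSat Y C) 𝒞 : ℝ) ≤
          (ε / 2) * (Multiset.countP (fun C => C.2.Nonempty) 𝒞 : ℝ) := by
  set m : ℕ := Multiset.countP (fun C => C.2.Nonempty) 𝒞 with hm
  have hlog : (0 : ℝ) ≤ Real.log (k + 1) := by
    apply Real.log_nonneg
    have : (1 : ℝ) ≤ (k : ℝ) := by exact_mod_cast hk
    linarith
  rcases Nat.eq_zero_or_pos m with hm0 | hmpos
  · refine ⟨∅, Finset.empty_subset V, ?_, ?_⟩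
    · simp only [Finset.card_empty, Nat.cast_zero]
      positivity
    · intro Y _ _
      have h0 : Multiset.countP
          (fun C => (C.2 \ (∅ : Finset α)).Nonempty ∧ ¬ ClauseSat Y C) 𝒞 = 0 := by
        have hle : Multiset.countP
            (fun C => (C.2 \ (∅ : Finset α)).Nonempty ∧ ¬ ClauseSat Y C) 𝒞 ≤ m := by
          refine countP_imp_le (fun C hC => ?_) 𝒞
          obtain ⟨⟨x, hx⟩, _⟩ := hC
          exact ⟨x, (Finset.mem_sdiff.1 hx).1⟩
        omega
      rw [h0, hm0]
      simp
  · have hmpos' : (0 : ℝ) < (m : ℝ) := by exact_mod_cast hmpos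
    have hD : (0 : ℝ) < (ε / 2) * m := by positivity
    have hcount0 : Multiset.countP (fun C => (C.2 \ (∅ : Finset α)).Nonempty) 𝒞 ≤ m := by
      refine countP_imp_le (fun C hC => ?_) 𝒞
      obtain ⟨x, hx⟩ := hC
      exact ⟨x, (Finset.mem_sdiff.1 hx).1⟩
    obtain ⟨W, _, hWV, hcard, hfinal⟩ :=
      build V 𝒞 k ((ε / 2) * m) hD m ∅ (Finset.empty_subset V) hcount0
    refine ⟨W, hWV, ?_, hfinal⟩
    have heq : (m : ℝ) / ((ε / 2) * m) = 2 / ε := by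
      field_simp
    have hbound : (W.card : ℝ) ≤ 2 * k / ε := by
      rw [heq] at hcard
      simp only [Finset.card_empty, Nat.cast_zero, zero_add] at hcard
      calc (W.card : ℝ) ≤ k * (2 / ε) := hcard
        _ = 2 * k / ε := by ring
    refine hbound.trans ?_
    rw [div_le_div_iff₀ hε0 hε0]
    nlinarith [mul_nonneg (mul_nonneg (by positivity : (0:ℝ) ≤ 2 * (k : ℝ)) hε0.le) hlog]
end

section
/- Let a, b, k ∈ ℕ with a, b, k ≥ 1, let ε ∈ (0, 1/2), and let τ be a real number with ε·τ ≥ 2b. Let Φ = (V, 𝒞) be a K_{a,b}-free CNF formula, let Y ⊆ V with |Y| ≤ k, and let S ⊆ V be a set of positive variables with S ∩ Y = ∅ such that deg_Φ(u) ≥ τ for every u ∈ S and |S| ≥ a · (2k/ε)^b. Then there exists u ∈ S with val_Φ(Y ∪ {u}) ≥ val_Φ(Y) + τ − max(ε·τ, (ε/k)·OPT_{Φ,k}). -/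
/-- `val Φ Y`: number of clause occurrences (with multiplicity) satisfied by `Y`. -/
def cnfVal {α : Type*} [DecidableEq α] (𝒞 : Multiset (Finset α × Finset α))
    (Y : Finset α) : ℕ :=
  Multiset.countP (fun C => ClauseSat Y C) 𝒞

/-- `OPT_{Φ,k}`: maximum of `val` over solutions `Y ⊆ V` with `|Y| ≤ k`. -/
def cnfOPT {α : Type*} [DecidableEq α] (V : Finset α)
    (𝒞 : Multiset (Finset α × Finset α)) (k : ℕ) : ℕ :=
  (V.powerset.filter (fun Y => Y.card ≤ k)).sup (cnfVal 𝒞)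

/-- `deg_Φ(v)`: number of clause occurrences (with multiplicity) containing `v`. -/
def cnfDeg {α : Type*} [DecidableEq α] (𝒞 : Multiset (Finset α × Finset α)) (v : α) : ℕ :=
  Multiset.countP (fun C => v ∈ C.1 ∪ C.2) 𝒞

/-- `Φ` is `K_{a,b}`-free: there are no `a` distinct variables and `b` clause
occurrences (a sub-multiset of size `b`) such that each of the variables occurs
in each of the clause occurrences. -/
def cnfKabFree {α : Type*} [DecidableEq α] (𝒞 : Multiset (Finset α × Finset α))
    (a b : ℕ) : Prop :=
  ¬ ∃ (S : Finset α) (T : Multiset (Finset α × Finset α)),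
      S.card = a ∧ T ≤ 𝒞 ∧ Multiset.card T = b ∧ ∀ C ∈ T, ∀ v ∈ S, v ∈ C.1 ∪ C.2

/-- double counting helper -/
lemma sum_countP_eq {β γ : Type*} [DecidableEq β] (S : Finset β) (P : Multiset γ)
    (p : β → γ → Prop) [∀ u, DecidablePred (p u)] :
    ∑ u ∈ S, P.countP (p u) =
      (P.map (fun T => (S.filter (fun u => p u T)).card)).sum := by
  induction P using Multiset.induction_on with
  | empty => simp
  | cons a s ih =>
    simp only [Multiset.countP_cons, Multiset.map_cons, Multiset.sum_cons,
      Finset.sum_add_distrib, ih, Finset.card_filter]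
    omega

set_option maxHeartbeats 1000000 in
/-- a greedy augmentation step for `K_{a,b}`-free formulas. -/
theorem stmt_9 {α : Type*} [DecidableEq α] (a b k : ℕ)
    (ha : 1 ≤ a) (hb : 1 ≤ b) (hk : 1 ≤ k)
    (ε : ℝ) (hε0 : 0 < ε) (hε1 : ε < 1 / 2)
    (τ : ℝ) (hτ : ε * τ ≥ 2 * b)
    (V : Finset α) (𝒞 : Multiset (Finset α × Finset α))
    (h𝒞 : ∀ C ∈ 𝒞, C.1 ⊆ V ∧ C.2 ⊆ V)
    (hfree : cnfKabFree 𝒞 a b)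
    (Y : Finset α) (hYV : Y ⊆ V) (hYk : Y.card ≤ k)
    (S : Finset α) (hSV : S ⊆ V)
    (hSpos : ∀ u ∈ S, ∀ C ∈ 𝒞, u ∉ C.2)
    (hSY : S ∩ Y = ∅)
    (hSdeg : ∀ u ∈ S, (cnfDeg 𝒞 u : ℝ) ≥ τ)
    (hScard : (S.card : ℝ) ≥ a * (2 * k / ε) ^ b) :
    ∃ u ∈ S, (cnfVal 𝒞 (insert u Y) : ℝ) ≥
      cnfVal 𝒞 Y + τ - max (ε * τ) ((ε / k) * cnfOPT V 𝒞 k) := by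
  classical
  by_contra hcon
  push_neg at hcon
  set M : ℝ := max (ε * τ) ((ε / k) * cnfOPT V 𝒞 k) with hMdef
  set 𝒞Y := Multiset.filter (fun C => ClauseSat Y C) 𝒞 with h𝒞Y
  set m := Multiset.card 𝒞Y with hmdef
  have hmval : cnfVal 𝒞 Y = m := Multiset.countP_eq_card_filter _ _
  set B : α → ℕ := fun u => Multiset.card (Multiset.filter (fun C => u ∈ C.1) 𝒞Y) with hB
  have hBle : ∀ u, B u ≤ m := fun u => Multiset.card_le_card (Multiset.filter_le _ _)
  -- value identity
  have hval : ∀ u ∈ S, cnfVal 𝒞 (insert u Y) + B u = cnfVal 𝒞 Y + cnfDeg 𝒞 u := by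
    intro u hu
    have hupos : ∀ C ∈ 𝒞, u ∉ C.2 := hSpos u hu
    have h1 : cnfVal 𝒞 (insert u Y)
        = Multiset.countP (fun C => ClauseSat (insert u Y) C) 𝒞Y
          + Multiset.countP (fun C => ClauseSat (insert u Y) C)
              (Multiset.filter (fun C => ¬ ClauseSat Y C) 𝒞) :=
      Multiset.countP_eq_countP_filter_add _ _ _
    have h1a : Multiset.countP (fun C => ClauseSat (insert u Y) C) 𝒞Y = m := by
      rw [hmdef]
      refine Multiset.countP_eq_card.2 fun C hC => ?_
      rw [h𝒞Y, Multiset.mem_filter] at hC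
      rcases hC.2 with h | h
      · exact Or.inl (h.mono (Finset.inter_subset_inter le_rfl (Finset.subset_insert u Y)))
      · refine Or.inr fun hsub => h fun x hx => ?_
        rcases Finset.mem_insert.mp (hsub hx) with rfl | hxY
        · exact absurd hx (hupos C hC.1)
        · exact hxY
    have h1b : Multiset.countP (fun C => ClauseSat (insert u Y) C)
          (Multiset.filter (fun C => ¬ ClauseSat Y C) 𝒞)
        = Multiset.countP (fun C => u ∈ C.1)
          (Multiset.filter (fun C => ¬ ClauseSat Y C) 𝒞) := by
      refine Multiset.countP_congr rfl fun C hC => ?_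
      rw [Multiset.mem_filter] at hC
      have hC𝒞 := hC.1
      have hns := hC.2
      have h2Y : C.2 ⊆ Y := by
        by_contra h; exact hns (Or.inr h)
      have h1Y : ¬ (C.1 ∩ Y).Nonempty := fun h => hns (Or.inl h)
      simp only [eq_iff_iff]
      constructor
      · rintro (⟨x, hx⟩ | h)
        · rw [Finset.mem_inter, Finset.mem_insert] at hx
          rcases hx.2 with rfl | hxY
          · exact hx.1
          · exact absurd ⟨x, Finset.mem_inter.2 ⟨hx.1, hxY⟩⟩ h1Y
        · exact absurd (h2Y.trans (Finset.subset_insert u Y)) h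
      · intro h
        exact Or.inl ⟨u, Finset.mem_inter.2 ⟨h, Finset.mem_insert_self u Y⟩⟩
    have h2 : cnfDeg 𝒞 u
        = Multiset.countP (fun C => u ∈ C.1) 𝒞Y
          + Multiset.countP (fun C => u ∈ C.1)
              (Multiset.filter (fun C => ¬ ClauseSat Y C) 𝒞) := by
      have : cnfDeg 𝒞 u = Multiset.countP (fun C => u ∈ C.1) 𝒞 :=
        Multiset.countP_congr rfl fun C hC => by
          simp only [eq_iff_iff, Finset.mem_union]
          exact ⟨fun h => h.resolve_right (hupos C hC), Or.inl⟩
      rw [this]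
      exact Multiset.countP_eq_countP_filter_add _ _ _
    have h3 : Multiset.countP (fun C => u ∈ C.1) 𝒞Y = B u :=
      Multiset.countP_eq_card_filter _ _
    rw [h1, h1a, h1b, hmval, h2, h3]
    ring
  -- OPT ≥ m
  have hOPT : m ≤ cnfOPT V 𝒞 k := by
    rw [← hmval]
    exact Finset.le_sup (Finset.mem_filter.2 ⟨Finset.mem_powerset.2 hYV, hYk⟩)
  -- from hcon : B u > M for all u in S
  have hBM : ∀ u ∈ S, M < (B u : ℝ) := by
    intro u hu
    have h := hcon u hu
    have hid := hval u hu
    have hdeg := hSdeg u hu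
    have : (cnfVal 𝒞 (insert u Y) : ℝ) + B u = cnfVal 𝒞 Y + cnfDeg 𝒞 u := by
      exact_mod_cast congrArg (Nat.cast : ℕ → ℝ) hid
    nlinarith [h, hdeg, this]
  have h2b : ∀ u ∈ S, 2 * b < B u := by
    intro u hu
    have : (2 * b : ℝ) < B u := lt_of_le_of_lt (le_trans hτ (le_max_left _ _)) (hBM u hu)
    exact_mod_cast this
  -- key counting
  have hkey : ∑ u ∈ S, (B u).choose b ≤ (a - 1) * m.choose b := by
    have hstep : ∀ u, (B u).choose b ≤
        (𝒞Y.powersetCard b).countP (fun T => T ≤ Multiset.filter (fun C => u ∈ C.1) 𝒞Y) := by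
      intro u
      rw [Multiset.countP_eq_card_filter]
      have hle : (Multiset.filter (fun C => u ∈ C.1) 𝒞Y).powersetCard b ≤
          Multiset.filter (fun T => T ≤ Multiset.filter (fun C => u ∈ C.1) 𝒞Y)
            (𝒞Y.powersetCard b) := by
        rw [Multiset.le_filter]
        constructor
        · exact Multiset.powersetCard_mono b (Multiset.filter_le _ _)
        · intro T hT
          exact (Multiset.mem_powersetCard.1 hT).1
      calc (B u).choose b
          = Multiset.card ((Multiset.filter (fun C => u ∈ C.1) 𝒞Y).powersetCard b) :=
            (Multiset.card_powersetCard _ _).symm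
        _ ≤ _ := Multiset.card_le_card hle
    calc ∑ u ∈ S, (B u).choose b
        ≤ ∑ u ∈ S, (𝒞Y.powersetCard b).countP
            (fun T => T ≤ Multiset.filter (fun C => u ∈ C.1) 𝒞Y) :=
          Finset.sum_le_sum fun u _ => hstep u
      _ = ((𝒞Y.powersetCard b).map (fun T =>
            (S.filter (fun u => T ≤ Multiset.filter (fun C => u ∈ C.1) 𝒞Y)).card)).sum :=
          sum_countP_eq S _ _
      _ ≤ Multiset.card ((𝒞Y.powersetCard b).map (fun T =>
            (S.filter (fun u => T ≤ Multiset.filter (fun C => u ∈ C.1) 𝒞Y)).card)) • (a - 1) := by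
          refine Multiset.sum_le_card_nsmul _ _ ?_
          intro x hx
          rw [Multiset.mem_map] at hx
          obtain ⟨T, hT, rfl⟩ := hx
          rw [Multiset.mem_powersetCard] at hT
          by_contra hgt
          push_neg at hgt
          have haS : a ≤ (S.filter (fun u => T ≤ Multiset.filter (fun C => u ∈ C.1) 𝒞Y)).card := by
            omega
          obtain ⟨A, hA, hAcard⟩ := Finset.exists_subset_card_eq haS
          refine hfree ⟨A, T, hAcard, hT.1.trans (Multiset.filter_le _ _), hT.2, ?_⟩
          intro C hC v hv
          have hvfil := Finset.mem_filter.1 (hA hv)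
          have hCmem : C ∈ Multiset.filter (fun C => v ∈ C.1) 𝒞Y :=
            Multiset.mem_of_le hvfil.2 hC
          rw [Multiset.mem_filter] at hCmem
          exact Finset.mem_union_left _ hCmem.2
      _ = m.choose b * (a - 1) := by
          rw [Multiset.card_map, Multiset.card_powersetCard, smul_eq_mul, ← hmdef]
      _ = (a - 1) * m.choose b := mul_comm _ _
  -- numeric consequences in ℕ
  have hnat : ∑ u ∈ S, (B u + 1 - b) ^ b ≤ (a - 1) * m ^ b := by
    calc ∑ u ∈ S, (B u + 1 - b) ^ b
        ≤ ∑ u ∈ S, (B u).descFactorial b :=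
          Finset.sum_le_sum fun u _ => Nat.pow_sub_le_descFactorial _ _
      _ = ∑ u ∈ S, Nat.factorial b * (B u).choose b := by
          refine Finset.sum_congr rfl fun u _ => Nat.descFactorial_eq_factorial_mul_choose _ _
      _ = Nat.factorial b * ∑ u ∈ S, (B u).choose b := by rw [Finset.mul_sum]
      _ ≤ Nat.factorial b * ((a - 1) * m.choose b) := Nat.mul_le_mul_left _ hkey
      _ = (a - 1) * (Nat.factorial b * m.choose b) := by ring
      _ = (a - 1) * m.descFactorial b := by rw [Nat.descFactorial_eq_factorial_mul_choose]
      _ ≤ (a - 1) * m ^ b := Nat.mul_le_mul_left _ (Nat.descFactorial_le_pow _ _)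
  -- S nonempty, m > 0
  have hkpos : (0:ℝ) < k := by exact_mod_cast hk
  have hpowpos : (0:ℝ) < (2 * k / ε) ^ b :=
    pow_pos (div_pos (by linarith) hε0) b
  have hSne : S.Nonempty := by
    rw [← Finset.card_pos]
    rcases Nat.eq_zero_or_pos S.card with h0 | h
    · rw [h0] at hScard
      push_cast at hScard
      nlinarith [hpowpos, (by exact_mod_cast ha : (1:ℝ) ≤ a)]
    · exact h
  obtain ⟨u0, hu0⟩ := Finset.Nonempty.exists_mem hSne
  have hBu0 := h2b u0 hu0
  have hmpos : 0 < m := by have := hBle u0; omega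
  -- pointwise bound
  have hterm : ∀ u ∈ S, (ε / (2 * k) * m) ^ b < ((B u + 1 - b : ℕ) : ℝ) ^ b := by
    intro u hu
    have hb1 := h2b u hu
    have hBMu := hBM u hu
    have hBreal : (2 * b : ℝ) < B u := by exact_mod_cast hb1
    have hMm : (ε / k) * m ≤ M := by
      refine le_trans ?_ (le_max_right _ _)
      have : (m : ℝ) ≤ (cnfOPT V 𝒞 k : ℝ) := by exact_mod_cast hOPT
      exact mul_le_mul_of_nonneg_left this (le_of_lt (div_pos hε0 hkpos))
    have hcast : ((B u + 1 - b : ℕ) : ℝ) = (B u : ℝ) + 1 - b := by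
      rw [Nat.cast_sub (by omega : b ≤ B u + 1)]
      push_cast
      ring
    rw [hcast]
    have hhalf : ε / (2 * k) * m = ((ε / k) * m) / 2 := by ring
    refine pow_lt_pow_left₀ ?_ (by positivity) (by omega)
    rw [hhalf]
    linarith
  -- sum bound
  have hnatR : ∑ u ∈ S, ((B u + 1 - b : ℕ) : ℝ) ^ b ≤ ((a - 1 : ℕ) : ℝ) * (m : ℝ) ^ b := by
    exact_mod_cast hnat
  have hsum : (S.card : ℝ) * (ε / (2 * k) * m) ^ b < ((a - 1 : ℕ) : ℝ) * (m : ℝ) ^ b := by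
    have h1 : ∑ _u ∈ S, (ε / (2 * k) * m) ^ b < ∑ u ∈ S, ((B u + 1 - b : ℕ) : ℝ) ^ b :=
      Finset.sum_lt_sum_of_nonempty hSne hterm
    rw [Finset.sum_const, nsmul_eq_mul] at h1
    linarith
  have hmr : (0 : ℝ) < (m : ℝ) ^ b := pow_pos (by exact_mod_cast hmpos) b
  have h5 : (S.card : ℝ) * (ε / (2 * k)) ^ b < ((a - 1 : ℕ) : ℝ) := by
    by_contra hge
    push_neg at hge
    have h6 : ((a - 1 : ℕ) : ℝ) * (m : ℝ) ^ b ≤ (S.card : ℝ) * (ε / (2 * k)) ^ b * (m : ℝ) ^ b :=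
      mul_le_mul_of_nonneg_right hge (le_of_lt hmr)
    rw [mul_pow] at hsum
    nlinarith [hsum, h6]
  have hcastA : ((a - 1 : ℕ) : ℝ) = (a : ℝ) - 1 := by
    rw [Nat.cast_sub ha]
    norm_num
  have hprod : (ε / (2 * k)) ^ b * (2 * k / ε) ^ b = 1 := by
    rw [← mul_pow]
    have : ε / (2 * k) * (2 * k / ε) = 1 := by
      field_simp
    rw [this, one_pow]
  have hfin : (S.card : ℝ) < ((a : ℝ) - 1) * (2 * k / ε) ^ b := by
    calc (S.card : ℝ) = (S.card : ℝ) * ((ε / (2 * k)) ^ b * (2 * k / ε) ^ b) := by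
          rw [hprod, mul_one]
      _ = (S.card : ℝ) * (ε / (2 * k)) ^ b * (2 * k / ε) ^ b := by ring
      _ < ((a : ℝ) - 1) * (2 * k / ε) ^ b := by
          refine mul_lt_mul_of_pos_right ?_ hpowpos
          rw [← hcastA]
          exact h5
  nlinarith [hScard, hpowpos, hfin]
end

section
/- Let a, b, k ∈ ℕ with a, b, k ≥ 1 and let ε ∈ (0, 1/4). Let Φ = (V, 𝒞) be a K_{a,b}-free CNF formula, let V_¬ ⊆ V be the set of its negative variables, and let τ ≥ 2b/ε be a real number. Suppose Q ⊆ V is a set of positive variables with |Q| ≥ k + a·(2k/ε)^b such that deg_Φ(v) ≥ τ for every v ∈ Q and deg_Φ(u) ≤ τ for every positive variable u ∉ Q. Then there exists Y ⊆ V_¬ ∪ Q with |Y| ≤ k and val_Φ(Y) ≥ (1 − ε)·OPT_{Φ,k}. -/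
/-!
Let `X` be an optimal solution and `t = |X \ (Vneg ∪ Q)|`. Every variable of `X` outside
`Vneg ∪ Q` is positive and not in `Q`, hence has degree at most `τ`, so dropping them gives
`OPT ≤ f + tτ` with `f = val(X ∩ (Vneg ∪ Q))`. We then add `t` variables of `Q` greedily. The
current solution satisfies at most `f + kτ = (2k/ε)·x` clauses, `x = ε(f + kτ)/(2k)`, and by
`K_{a,b}`-freeness at most `(a - 1)(2k/ε)^b < |Q|` variables of `Q` occur in `b + ⌊x⌋` or more
of them. Any other `w ∈ Q` has degree at least `τ` and, being positive, satisfies at least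
`τ - b - x` new clauses. The total loss `t(b + x)` is at most `ε(f + tτ)` because `2b ≤ ετ`.
-/

section Clauses

open Finset

variable {α : Type*} [DecidableEq α] {𝒞 : Multiset (Finset α × Finset α)}

theorem clauseSat_insert_iff {Y : Finset α} {w : α} {C : Finset α × Finset α} (hw : w ∉ C.2) :
    ClauseSat (insert w Y) C ↔ w ∈ C.1 ∨ ClauseSat Y C := by
  by_cases h : w ∈ C.1 <;>
    simp [ClauseSat, subset_insert_iff_of_notMem hw, inter_insert_of_mem, inter_insert_of_notMem, h]

theorem cnfVal_insert_add_cnfDeg_filter {Y : Finset α} {w : α} (hw : ∀ C ∈ 𝒞, w ∉ C.2) :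
    cnfVal 𝒞 (insert w Y) + cnfDeg (𝒞.filter (ClauseSat Y)) w = cnfVal 𝒞 Y + cnfDeg 𝒞 w := by
  have hsat : (𝒞.filter (ClauseSat Y)).countP (ClauseSat (insert w Y)) = cnfVal 𝒞 Y := by
    rw [Multiset.countP_eq_card.2, cnfVal, Multiset.countP_eq_card_filter]
    intro C hC
    exact (clauseSat_insert_iff (hw C (Multiset.mem_of_mem_filter hC))).2
      (.inr (Multiset.of_mem_filter hC))
  have hunsat : (𝒞.filter (¬ ClauseSat Y ·)).countP (ClauseSat (insert w Y)) =
      (𝒞.filter (¬ ClauseSat Y ·)).countP (fun C => w ∈ C.1 ∪ C.2) := by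
    refine Multiset.countP_congr rfl fun C hC => ?_
    have hwC := hw C (Multiset.mem_of_mem_filter hC)
    simp [clauseSat_insert_iff hwC, Multiset.of_mem_filter hC, hwC]
  rw [cnfVal, cnfDeg, cnfDeg, Multiset.countP_eq_countP_filter_add 𝒞 _ (ClauseSat Y),
    Multiset.countP_eq_countP_filter_add 𝒞 (fun C => w ∈ C.1 ∪ C.2) (ClauseSat Y), hsat, hunsat]
  ring

theorem cnfVal_union_le_add_sum_cnfDeg (Y : Finset α) {D : Finset α}
    (hD : ∀ d ∈ D, ∀ C ∈ 𝒞, d ∉ C.2) :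
    cnfVal 𝒞 (Y ∪ D) ≤ cnfVal 𝒞 Y + ∑ d ∈ D, cnfDeg 𝒞 d := by
  induction D using Finset.induction_on with
  | empty => simp
  | insert d D hdD ih =>
    have hins := cnfVal_insert_add_cnfDeg_filter (Y := Y ∪ D) (hD d (mem_insert_self d D))
    rw [union_insert, sum_insert hdD]
    have := ih fun v hv => hD v (mem_insert_of_mem hv)
    omega

theorem cnfVal_le_cnfVal_inter_add_card_mul {X : Finset α} (U : Finset α) {τ : ℝ}
    (hD : ∀ d ∈ X \ U, (∀ C ∈ 𝒞, d ∉ C.2) ∧ (cnfDeg 𝒞 d : ℝ) ≤ τ) :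
    (cnfVal 𝒞 X : ℝ) ≤ cnfVal 𝒞 (X ∩ U) + (X \ U).card * τ := by
  have h := cnfVal_union_le_add_sum_cnfDeg (𝒞 := 𝒞) (X ∩ U) fun d hd => (hD d hd).1
  rw [union_comm, sdiff_union_inter] at h
  have hsum := sum_le_card_nsmul (X \ U) (fun d => (cnfDeg 𝒞 d : ℝ)) τ fun d hd => (hD d hd).2
  rw [nsmul_eq_mul] at hsum
  calc (cnfVal 𝒞 X : ℝ) ≤ cnfVal 𝒞 (X ∩ U) + ∑ d ∈ X \ U, (cnfDeg 𝒞 d : ℝ) := by exact_mod_cast h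
    _ ≤ _ := by linarith

theorem cnfVal_le_cnfOPT {V Y : Finset α} {k : ℕ} (hYV : Y ⊆ V) (hYk : Y.card ≤ k) :
    cnfVal 𝒞 Y ≤ cnfOPT V 𝒞 k :=
  le_sup (f := cnfVal 𝒞) (mem_filter.2 ⟨mem_powerset.2 hYV, hYk⟩)

theorem exists_cnfVal_eq_cnfOPT (V : Finset α) (𝒞 : Multiset (Finset α × Finset α)) (k : ℕ) :
    ∃ X ⊆ V, X.card ≤ k ∧ cnfVal 𝒞 X = cnfOPT V 𝒞 k := by
  have hne : (V.powerset.filter (·.card ≤ k)).Nonempty := ⟨∅, by simp⟩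
  obtain ⟨X, hX, hXopt⟩ := exists_mem_eq_sup _ hne (cnfVal 𝒞)
  rw [mem_filter, mem_powerset] at hX
  exact ⟨X, hX.1, hX.2, hXopt.symm⟩

end Clauses

section KabFree

open Finset

theorem Finset.sum_countP_eq_sum_map_card_filter {ι β : Type*} (s : Finset ι) (M : Multiset β)
    (P : ι → β → Prop) [∀ i x, Decidable (P i x)] :
    ∑ i ∈ s, M.countP (P i) = (M.map fun x => #{i ∈ s | P i x}).sum := by
  induction M using Multiset.induction with
  | empty => simp
  | cons x M ih =>
    simp only [Multiset.countP_cons, Multiset.map_cons, Multiset.sum_cons, sum_add_distrib, ih,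
      card_filter, add_comm]

variable {α : Type*} [DecidableEq α] {𝒞 A : Multiset (Finset α × Finset α)} {a b : ℕ}

theorem cnfKabFree.card_filter_mul_choose_le (hfree : cnfKabFree 𝒞 a b) (hA : A ≤ 𝒞) (Q : Finset α)
    (s : ℕ) : #{v ∈ Q | s ≤ cnfDeg A v} * s.choose b ≤ (a - 1) * (Multiset.card A).choose b := by
  set B := {v ∈ Q | s ≤ cnfDeg A v}
  -- Double count pairs `(v, T)`, `v ∈ B`, `T` a `b`-submultiset of `A` all of whose clauses
  -- contain `v`: each `v` lies in at least `C(s, b)` of them, each `T` in at most `a - 1`.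
  let covers (v : α) (T : Multiset (Finset α × Finset α)) : Prop := ∀ C ∈ T, v ∈ C.1 ∪ C.2
  have hfew : ∀ T ∈ A.powersetCard b, #{v ∈ B | covers v T} ≤ a - 1 := by
    intro T hT
    rw [Multiset.mem_powersetCard] at hT
    by_contra! h
    obtain ⟨S, hS, hScard⟩ := exists_subset_card_eq (show a ≤ #{v ∈ B | covers v T} by omega)
    exact hfree ⟨S, T, hScard, hT.1.trans hA, hT.2, fun C hC v hv => (mem_filter.1 (hS hv)).2 C hC⟩
  have hmany : ∀ v ∈ B, s.choose b ≤ (A.powersetCard b).countP (covers v) := by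
    intro v hv
    set Av := A.filter (fun C => v ∈ C.1 ∪ C.2)
    have hle : Av.powersetCard b ≤ (A.powersetCard b).filter (covers v) :=
      Multiset.le_filter.2 ⟨Multiset.powersetCard_mono b (Multiset.filter_le _ A),
        fun T hT C hC =>
          (Multiset.mem_filter.1 (Multiset.mem_of_le (Multiset.mem_powersetCard.1 hT).1 hC)).2⟩
    calc s.choose b ≤ (Multiset.card Av).choose b :=
          Nat.choose_le_choose b ((mem_filter.1 hv).2.trans_eq (Multiset.countP_eq_card_filter _ _))
      _ = Multiset.card (Av.powersetCard b) := (Multiset.card_powersetCard b Av).symm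
      _ ≤ _ := (Multiset.card_le_card hle).trans_eq (Multiset.countP_eq_card_filter _ _).symm
  calc #B * s.choose b ≤ ∑ v ∈ B, (A.powersetCard b).countP (covers v) := by
        simpa [mul_comm] using card_nsmul_le_sum B _ _ hmany
    _ = ((A.powersetCard b).map fun T => #{v ∈ B | covers v T}).sum :=
        sum_countP_eq_sum_map_card_filter B _ covers
    _ ≤ Multiset.card (A.powersetCard b) * (a - 1) := by
        refine (Multiset.sum_le_card_nsmul _ (a - 1) fun x hx => ?_).trans_eq (by simp)
        obtain ⟨T, hT, rfl⟩ := Multiset.mem_map.1 hx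
        exact hfew T hT
    _ = (a - 1) * (Multiset.card A).choose b := by rw [Multiset.card_powersetCard, mul_comm]

open Nat in
theorem cnfKabFree.card_filter_le_mul_pow (hfree : cnfKabFree 𝒞 a b) (ha : 1 ≤ a) (hA : A ≤ 𝒞)
    (Q : Finset α) (n : ℕ) {R : ℝ} (hAcard : (Multiset.card A : ℝ) ≤ R * (n + 1)) :
    (#{v ∈ Q | b + n ≤ cnfDeg A v} : ℝ) ≤ (a - 1) * R ^ b := by
  set m := Multiset.card A
  have hcount : (#{v ∈ Q | b + n ≤ cnfDeg A v} : ℝ) * (b + n).choose b ≤ (a - 1) * m.choose b :=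
    mod_cast hfree.card_filter_mul_choose_le hA Q (b + n)
  have hlow : ((n + 1 : ℝ) ^ b) / b ! ≤ (b + n).choose b := by
    have hsub : b + n + 1 - b = n + 1 := by omega
    simpa [hsub] using Nat.pow_le_choose (α := ℝ) b (b + n)
  have hup : (m.choose b : ℝ) ≤ m ^ b / b ! := Nat.choose_le_pow_div b m
  have hm : (m : ℝ) ^ b ≤ R ^ b * (n + 1) ^ b := by
    rw [← mul_pow]; exact pow_le_pow_left₀ (Nat.cast_nonneg _) hAcard b
  have ha' : (0 : ℝ) ≤ a - 1 := sub_nonneg.2 (by exact_mod_cast ha)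
  refine le_of_mul_le_mul_right ?_ (by positivity : 0 < ((n + 1 : ℝ) ^ b) / b !)
  calc (#{v ∈ Q | b + n ≤ cnfDeg A v} : ℝ) * ((n + 1) ^ b / b !)
      ≤ #{v ∈ Q | b + n ≤ cnfDeg A v} * (b + n).choose b := by gcongr
    _ ≤ (a - 1) * m.choose b := hcount
    _ ≤ (a - 1) * (R ^ b * (n + 1) ^ b / b !) := by
        gcongr; exact hup.trans (by gcongr)
    _ = (a - 1) * R ^ b * ((n + 1) ^ b / b !) := by ring

end KabFree

section Greedy

open Finset

theorem Finset.exists_subset_card_le_add_mul_le {α : Type*} [DecidableEq α] {F : Finset α → ℝ}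
    {Q : Finset α} {g : ℝ} (t : ℕ)
    (hstep : ∀ W ⊆ Q, W.card < t → ∃ w ∈ Q, F W + g ≤ F (insert w W)) :
    ∃ W ⊆ Q, W.card ≤ t ∧ F ∅ + t * g ≤ F W := by
  induction t with
  | zero => exact ⟨∅, empty_subset Q, le_rfl, by simp⟩
  | succ t ih =>
    obtain ⟨W, hWQ, hWt, hW⟩ := ih fun W hWQ hWt => hstep W hWQ (by omega)
    obtain ⟨w, hwQ, hw⟩ := hstep W hWQ (by omega)
    refine ⟨insert w W, insert_subset hwQ hWQ, (card_insert_le w W).trans (by omega), ?_⟩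
    push_cast
    linarith

variable {α : Type*} [DecidableEq α] {𝒞 : Multiset (Finset α × Finset α)} {a b : ℕ}
  {Q : Finset α} {τ R x : ℝ}

theorem exists_mem_cnfVal_insert_ge (hfree : cnfKabFree 𝒞 a b) (ha : 1 ≤ a)
    (hQpos : ∀ v ∈ Q, ∀ C ∈ 𝒞, v ∉ C.2) (hQdeg : ∀ v ∈ Q, τ ≤ cnfDeg 𝒞 v) (hR : 0 ≤ R)
    (hx : 0 ≤ x) (hQ : (a - 1) * R ^ b < Q.card) {Y : Finset α}
    (hY : (cnfVal 𝒞 Y : ℝ) ≤ R * x) :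
    ∃ w ∈ Q, (cnfVal 𝒞 Y : ℝ) + (τ - b - x) ≤ cnfVal 𝒞 (insert w Y) := by
  set A := 𝒞.filter (ClauseSat Y)
  set n := ⌊x⌋₊
  have hA : (Multiset.card A : ℝ) ≤ R * (n + 1) := by
    rw [← Multiset.countP_eq_card_filter]
    exact hY.trans (mul_le_mul_of_nonneg_left (Nat.lt_floor_add_one x).le hR)
  have hbad := hfree.card_filter_le_mul_pow ha (Multiset.filter_le _ 𝒞) Q n hA
  obtain ⟨w, hwQ, hw⟩ : ∃ w ∈ Q, cnfDeg A w < b + n := by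
    by_contra! h
    rw [filter_true_of_mem h] at hbad
    linarith
  refine ⟨w, hwQ, ?_⟩
  have hgain : (cnfVal 𝒞 (insert w Y) : ℝ) + cnfDeg A w = cnfVal 𝒞 Y + cnfDeg 𝒞 w := by
    exact_mod_cast cnfVal_insert_add_cnfDeg_filter (hQpos w hwQ)
  have hw' : (cnfDeg A w : ℝ) + 1 ≤ b + n := by exact_mod_cast hw
  linarith [hQdeg w hwQ, Nat.floor_le hx]

theorem exists_subset_cnfVal_union_ge (hfree : cnfKabFree 𝒞 a b) (ha : 1 ≤ a)
    (hQpos : ∀ v ∈ Q, ∀ C ∈ 𝒞, v ∉ C.2) (hQdeg : ∀ v ∈ Q, τ ≤ cnfDeg 𝒞 v) (hR : 0 ≤ R)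
    (hx : 0 ≤ x) (hQ : (a - 1) * R ^ b < Q.card) (Y₀ : Finset α) (t : ℕ)
    (hbound : ∀ W ⊆ Q, W.card < t → (cnfVal 𝒞 (Y₀ ∪ W) : ℝ) ≤ R * x) :
    ∃ W ⊆ Q, W.card ≤ t ∧ (cnfVal 𝒞 Y₀ : ℝ) + t * (τ - b - x) ≤ cnfVal 𝒞 (Y₀ ∪ W) := by
  simpa using exists_subset_card_le_add_mul_le (F := fun W => (cnfVal 𝒞 (Y₀ ∪ W) : ℝ)) t
    fun W hWQ hWt => by
      simpa [union_insert] using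
        exists_mem_cnfVal_insert_ge hfree ha hQpos hQdeg hR hx hQ (hbound W hWQ hWt)

end Greedy

theorem one_sub_mul_le_add_mul_sub {ε τ b k t f O : ℝ} (hε0 : 0 < ε) (hε1 : ε ≤ 1) (hk : 0 < k)
    (ht0 : 0 ≤ t) (htk : t ≤ k) (hf : 0 ≤ f) (hτb : 2 * b ≤ ε * τ) (hO : O ≤ f + t * τ) :
    (1 - ε) * O ≤ f + t * (τ - b - ε * (f + k * τ) / (2 * k)) := by
  have htx : t * (ε * (f + k * τ) / (2 * k)) ≤ ε * f / 2 + ε * t * τ / 2 := by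
    rw [mul_div_assoc', div_le_iff₀ (by positivity)]
    nlinarith [mul_le_mul_of_nonneg_left htk (by positivity : 0 ≤ ε * f)]
  nlinarith [mul_le_mul_of_nonneg_left hO (by linarith : 0 ≤ 1 - ε),
    mul_le_mul_of_nonneg_left hτb ht0]

theorem stmt_10_general {α : Type*} [DecidableEq α] (a b k : ℕ)
    (ha : 1 ≤ a) (hk : 1 ≤ k)
    (ε : ℝ) (hε0 : 0 < ε) (hε1 : ε < 1 / 4)
    (V : Finset α) (𝒞 : Multiset (Finset α × Finset α))
    (hfree : cnfKabFree 𝒞 a b)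
    (Vneg : Finset α)
    (hVneg : ∀ v, v ∈ Vneg ↔ v ∈ V ∧ ∃ C ∈ 𝒞, v ∈ C.2)
    (τ : ℝ) (hτ : τ ≥ 2 * b / ε)
    (Q : Finset α) (hQV : Q ⊆ V)
    (hQpos : ∀ v ∈ Q, ∀ C ∈ 𝒞, v ∉ C.2)
    (hQcard : (Q.card : ℝ) ≥ k + a * (2 * k / ε) ^ b)
    (hQdeg : ∀ v ∈ Q, (cnfDeg 𝒞 v : ℝ) ≥ τ)
    (hout : ∀ u ∈ V, u ∉ Q → (∀ C ∈ 𝒞, u ∉ C.2) → (cnfDeg 𝒞 u : ℝ) ≤ τ) :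
    ∃ Y ⊆ Vneg ∪ Q, Y.card ≤ k ∧
      (cnfVal 𝒞 Y : ℝ) ≥ (1 - ε) * cnfOPT V 𝒞 k := by
  obtain ⟨X, hXV, hXk, hXopt⟩ := exists_cnfVal_eq_cnfOPT V 𝒞 k
  set U := Vneg ∪ Q
  set f : ℝ := (cnfVal 𝒞 (X ∩ U) : ℝ)
  set t := (X \ U).card
  have hOPT : (cnfOPT V 𝒞 k : ℝ) ≤ f + t * τ := by
    rw [← hXopt]
    refine cnfVal_le_cnfVal_inter_add_card_mul U fun d hd => ?_
    obtain ⟨hdX, hdU⟩ := Finset.mem_sdiff.1 hd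
    have hdpos : ∀ C ∈ 𝒞, d ∉ C.2 := fun C hC hdC =>
      hdU (Finset.mem_union_left Q ((hVneg d).2 ⟨hXV hdX, C, hC, hdC⟩))
    exact ⟨hdpos, hout d (hXV hdX) (fun hdQ => hdU (Finset.mem_union_right Vneg hdQ)) hdpos⟩
  have hcard (W : Finset α) (hW : W.card ≤ t) : (X ∩ U ∪ W).card ≤ k :=
    (Finset.card_union_le _ _).trans (by have := Finset.card_inter_add_card_sdiff X U; omega)
  have hk0 : (0 : ℝ) < k := by exact_mod_cast hk
  have htk : (t : ℝ) ≤ k := mod_cast (Finset.card_le_card Finset.sdiff_subset).trans hXk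
  have hτb : 2 * b ≤ ε * τ := by linarith [(div_le_iff₀ hε0).1 hτ]
  have hτ0 : 0 ≤ τ := nonneg_of_mul_nonneg_right ((by positivity : (0 : ℝ) ≤ 2 * b).trans hτb) hε0
  have hQ : (a - 1) * (2 * k / ε) ^ b < Q.card := by
    have : (0 : ℝ) < (2 * k / ε) ^ b := by positivity
    linarith
  obtain ⟨W, hWQ, hWt, hW⟩ := exists_subset_cnfVal_union_ge hfree ha hQpos hQdeg (by positivity)
    (by positivity : 0 ≤ ε * (f + k * τ) / (2 * k)) hQ (X ∩ U) t fun W hWQ hWt => calc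
      (cnfVal 𝒞 (X ∩ U ∪ W) : ℝ) ≤ cnfOPT V 𝒞 k := mod_cast cnfVal_le_cnfOPT
          (Finset.union_subset (Finset.inter_subset_left.trans hXV) (hWQ.trans hQV))
          (hcard W hWt.le)
      _ ≤ f + k * τ := hOPT.trans (by gcongr)
      _ = 2 * k / ε * (ε * (f + k * τ) / (2 * k)) := by field_simp
  refine ⟨X ∩ U ∪ W, Finset.union_subset Finset.inter_subset_right
    (hWQ.trans Finset.subset_union_right), hcard W hWt, ?_⟩
  exact (one_sub_mul_le_add_mul_sub hε0 (by linarith) hk0 (Nat.cast_nonneg t) htk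
    (Nat.cast_nonneg _) hτb hOPT).trans hW

/-- keeping the negative variables together with a set `Q` of
high-degree positive variables preserves the optimum up to a factor `1 − ε`. -/
theorem stmt_10 {α : Type*} [DecidableEq α] (a b k : ℕ)
    (ha : 1 ≤ a) (hb : 1 ≤ b) (hk : 1 ≤ k)
    (ε : ℝ) (hε0 : 0 < ε) (hε1 : ε < 1 / 4)
    (V : Finset α) (𝒞 : Multiset (Finset α × Finset α))
    (h𝒞 : ∀ C ∈ 𝒞, C.1 ⊆ V ∧ C.2 ⊆ V)
    (hfree : cnfKabFree 𝒞 a b)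
    (Vneg : Finset α)
    (hVneg : ∀ v, v ∈ Vneg ↔ v ∈ V ∧ ∃ C ∈ 𝒞, v ∈ C.2)
    (τ : ℝ) (hτ : τ ≥ 2 * b / ε)
    (Q : Finset α) (hQV : Q ⊆ V)
    (hQpos : ∀ v ∈ Q, ∀ C ∈ 𝒞, v ∉ C.2)
    (hQcard : (Q.card : ℝ) ≥ k + a * (2 * k / ε) ^ b)
    (hQdeg : ∀ v ∈ Q, (cnfDeg 𝒞 v : ℝ) ≥ τ)
    (hout : ∀ u ∈ V, u ∉ Q → (∀ C ∈ 𝒞, u ∉ C.2) → (cnfDeg 𝒞 u : ℝ) ≤ τ) :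
    ∃ Y ⊆ Vneg ∪ Q, Y.card ≤ k ∧
      (cnfVal 𝒞 Y : ℝ) ≥ (1 - ε) * cnfOPT V 𝒞 k :=
  stmt_10_general a b k ha hk ε hε0 hε1 V 𝒞 hfree Vneg hVneg τ hτ Q hQV hQpos hQcard hQdeg hout
end
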